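/- Let μ < κ be regular cardinals and λ > κ, and assume δ^{<κ} = δ for every regular cardinal δ ∈ (κ, λ). Then there is an order-isomorphism from a dense subset of L(μ, λ)↾[κ, λ) onto a dense subset of Col(μ, κ) × L(κ, λ). -/

import Mathlib

open Ordinal Cardinal Set

/-- A partial function on ordinals, as an `Option`-valued function. -/
abbrev PartFun := Ordinal.{0} → Option Ordinal.{0}

/-- A Laver-collapse condition is a partial function assigning partial functions to ordinals. -/
abbrev LaverFun := Ordinal → Option PartFun

/-- `δ` is a regular cardinal (as an ordinal). -/
def IsRegOrd (δ : Ordinal) : Prop := δ.card.IsRegular ∧ δ.card.ord = δ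

/-- Domain of a partial function. -/
def pdom (g : PartFun) : Set Ordinal := {a | (g a).isSome}

/-- Domain of a Laver condition. -/
def ldom (p : LaverFun) : Set Ordinal := {δ | (p δ).isSome}

/-- An Easton set: bounded below every regular cardinal. -/
def IsEaston (X : Set Ordinal) : Prop := ∀ α, IsRegOrd α → sSup (X ∩ Set.Iio α) < α

/-- Laver condition with bound below `μ` and whose domain consists of regular cardinals in `S`. -/
def IsLaverOn (μ : Ordinal) (S : Set Ordinal) (p : LaverFun) : Prop :=
  (∀ δ ∈ ldom p, IsRegOrd δ ∧ δ ∈ S) ∧ IsEaston (ldom p) ∧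
    ∃ ξ < μ, ∀ δ g, p δ = some g → ∀ a b, g a = some b → a < ξ ∧ b < δ

/-- A condition of the Laver collapse `𝕃(μ, λ)`. -/
def IsLaver (μ lam : Ordinal) (p : LaverFun) : Prop := IsLaverOn μ (Set.Ioo μ lam) p

/-- Extension of partial functions: `g'` extends `g`. -/
def PFunLE (g' g : PartFun) : Prop := ∀ a b, g a = some b → g' a = some b

/-- The Laver collapse order: `p` extends `q`. -/
def LaverLE (p q : LaverFun) : Prop :=
  ∀ δ g, q δ = some g → ∃ g', p δ = some g' ∧ PFunLE g' g

/-- A condition of the collapse `Col(μ, κ)`: a partial function from `μ` to `κ` of size `< μ`. -/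
def IsCol (μ κ : Ordinal) (g : PartFun) : Prop :=
  (∀ a b, g a = some b → a < μ ∧ b < κ) ∧ Cardinal.mk (pdom g) < Cardinal.lift.{1} μ.card

/-!
For `p` in the dense set of conditions whose domain contains `κ` and whose coordinates are all
total functions on one common `ξ < μ`, send `p` to `(p(κ), q)`, where `q(δ)` lists, one after the
other in blocks of length `1 + p(κ)(a)` for `a < ξ`, codes of the values `p(δ)(a) < δ`; such codes
exist because `δ ^ (1 + p(κ)(a)) = δ` by `δ^{<κ} = δ`. Since the collapse coordinate `p(κ)`
prescribes the block lengths, each `q(δ)` lives on an ordinal below `κ` (by regularity of `κ`),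
and `p` extends `p'` exactly when `p(κ)` extends `p'(κ)` and the codes extend coordinatewise.
For density of the image, given `(g, q)` first extend `g` to a total function `s` on some
`ζ + 1 < μ` with `s(ζ)` the bound of `q`; then the blocks of `s` cover the domains of `q`, and each
block of `q(δ)`, padded with zeros, is the code of some ordinal below `δ`.
-/

-- `blockStart L a = ∑_{b < a} (1 + L b)`: block `b` is `[blockStart L b, blockStart L (b + 1))`.
noncomputable def blockStart (L : Ordinal.{0} → Ordinal.{0}) (a : Ordinal.{0}) : Ordinal.{0} :=
  ⨆ b : Iio a, (blockStart L b + 1 + L b)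
termination_by a
decreasing_by exact b.2

section Blocks

variable {L L' : Ordinal.{0} → Ordinal.{0}}

theorem blockStart_eq_iSup (L : Ordinal → Ordinal) (a : Ordinal) :
    blockStart L a = ⨆ b : Iio a, (blockStart L b + 1 + L b) := by
  rw [blockStart]

theorem blockStart_add_one_add_le {a b : Ordinal} (h : b < a) :
    blockStart L b + 1 + L b ≤ blockStart L a := by
  rw [blockStart_eq_iSup L a]
  exact Ordinal.le_iSup (fun b : Iio a => blockStart L b + 1 + L b) ⟨b, h⟩

theorem blockStart_strictMono (L : Ordinal → Ordinal) : StrictMono (blockStart L) :=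
  fun _ _ h => (Order.lt_add_one_iff.mpr le_rfl).trans_le
    (le_self_add.trans (blockStart_add_one_add_le h))

theorem blockStart_add_one (L : Ordinal → Ordinal) (a : Ordinal) :
    blockStart L (a + 1) = blockStart L a + (1 + L a) := by
  rw [← add_assoc]
  refine le_antisymm ?_ (blockStart_add_one_add_le (Order.lt_add_one_iff.mpr le_rfl))
  rw [blockStart_eq_iSup L (a + 1)]
  refine Ordinal.iSup_le fun ⟨b, hb⟩ => ?_
  rcases (Order.lt_add_one_iff.mp (mem_Iio.mp hb)).lt_or_eq with hb | rfl
  · exact (blockStart_add_one_add_le hb).trans (le_self_add.trans le_self_add)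
  · exact le_rfl

theorem blockStart_congr {a : Ordinal} (h : ∀ b < a, L' b = L b) :
    blockStart L' a = blockStart L a := by
  induction a using WellFoundedLT.induction with
  | _ a ih =>
    rw [blockStart_eq_iSup L' a, blockStart_eq_iSup L a]
    congr! 2 with ⟨b, hb⟩
    rw [ih b hb fun c hc => h c (hc.trans hb), h b hb]

theorem blockStart_lt_ord {c : Cardinal.{0}} (hc : c.IsRegular) {a : Ordinal} (ha : a.card < c)
    (hL : ∀ b, L b < c.ord) : blockStart L a < c.ord := by
  induction a using WellFoundedLT.induction with
  | _ a ih =>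
    rw [blockStart_eq_iSup]
    refine Ordinal.lift_iSup_lt_of_lt_cof ?_ fun ⟨b, hb⟩ => ?_
    · rw [← Ordinal.lift_cof, hc.cof_ord]
      simpa [Cardinal.mk_Iio_ordinal, ← Ordinal.lift_card] using ha
    · have hb' := ih b hb ((Ordinal.card_le_card hb.le).trans_lt ha)
      rw [Cardinal.lt_ord] at hb' ⊢
      rw [Ordinal.card_add, Ordinal.card_add, Ordinal.card_one]
      exact Cardinal.add_lt_of_lt hc.aleph0_le
        (Cardinal.add_lt_of_lt hc.aleph0_le hb' (Cardinal.one_lt_aleph0.trans_le hc.aleph0_le))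
        (Cardinal.lt_ord.mp (hL b))

noncomputable def blockIndex (L : Ordinal → Ordinal) (β : Ordinal) : Ordinal :=
  sInf {b | β < blockStart L (b + 1)}

theorem lt_blockStart_blockIndex_add_one (L : Ordinal → Ordinal) (β : Ordinal) :
    β < blockStart L (blockIndex L β + 1) :=
  csInf_mem (s := {b | β < blockStart L (b + 1)})
    ⟨β, (Order.lt_add_one_iff.mpr le_rfl).trans_le (blockStart_strictMono L).le_apply⟩

theorem blockStart_blockIndex_le (L : Ordinal → Ordinal) (β : Ordinal) :
    blockStart L (blockIndex L β) ≤ β := by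
  rw [blockStart_eq_iSup]
  refine Ordinal.iSup_le fun ⟨b, hb⟩ => ?_
  rw [add_assoc, ← blockStart_add_one]
  have hb : b ∉ {b | β < blockStart L (b + 1)} :=
    notMem_of_lt_csInf (mem_Iio.mp hb) (OrderBot.bddBelow _)
  exact not_lt.mp hb

theorem blockIndex_lt_iff {β a : Ordinal} : blockIndex L β < a ↔ β < blockStart L a := by
  refine ⟨fun h => (lt_blockStart_blockIndex_add_one L β).trans_le ?_, fun h => ?_⟩
  · exact (blockStart_strictMono L).monotone (Order.add_one_le_of_lt h)
  · by_contra! ha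
    exact (h.trans_le ((blockStart_strictMono L).monotone ha)).not_ge
      (blockStart_blockIndex_le L β)

theorem blockIndex_blockStart_add {b i : Ordinal} (hi : i < 1 + L b) :
    blockIndex L (blockStart L b + i) = b := by
  refine le_antisymm (csInf_le (OrderBot.bddBelow _) ?_) (not_lt.mp fun h => ?_)
  · simpa [blockStart_add_one] using hi
  · exact (blockIndex_lt_iff.mp h).not_ge le_self_add

theorem exists_blockStart_add_eq (L : Ordinal → Ordinal) (β : Ordinal) :
    ∃ b, ∃ i < 1 + L b, blockStart L b + i = β := by
  refine ⟨blockIndex L β, β - blockStart L (blockIndex L β), ?_,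
    Ordinal.add_sub_cancel_of_le (blockStart_blockIndex_le L β)⟩
  have h : blockStart L (blockIndex L β) + (β - blockStart L (blockIndex L β)) <
      blockStart L (blockIndex L β) + (1 + L (blockIndex L β)) := by
    rw [Ordinal.add_sub_cancel_of_le (blockStart_blockIndex_le L β), ← blockStart_add_one]
    exact lt_blockStart_blockIndex_add_one L β
  exact (add_lt_add_iff_left _).mp h

theorem blockStart_add_lt_iff {a b i : Ordinal} (hi : i < 1 + L b) :
    blockStart L b + i < blockStart L a ↔ b < a := by
  rw [← blockIndex_lt_iff, blockIndex_blockStart_add hi]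

end Blocks

structure IsFunOn (ξ δ : Ordinal) (f : PartFun) : Prop where
  pdom_eq : pdom f = Iio ξ
  lt_of_eq_some : ∀ {a b}, f a = some b → b < δ

namespace IsFunOn

variable {ξ δ δ' : Ordinal} {f g : PartFun}

theorem isSome_iff (hf : IsFunOn ξ δ f) {a : Ordinal} : (f a).isSome ↔ a < ξ :=
  Set.ext_iff.mp hf.pdom_eq a

theorem getD_lt (hf : IsFunOn ξ δ f) (hδ : 0 < δ) (a : Ordinal) : (f a).getD 0 < δ := by
  cases hfa : f a with
  | none => exact hδ
  | some b => exact hf.lt_of_eq_some hfa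

theorem eq_of_le (hf : IsFunOn ξ δ f) (hg : IsFunOn ξ δ' g) (h : PFunLE f g) : f = g := by
  funext a
  cases hga : g a with
  | some b => exact h a b hga
  | none =>
    rw [← Option.not_isSome_iff_eq_none, hf.isSome_iff, ← hg.isSome_iff, hga]
    simp

end IsFunOn

noncomputable def padTo (η : Ordinal) (g : PartFun) : PartFun := fun i =>
  if i < η then some ((g i).getD 0) else none

theorem isFunOn_padTo {η δ : Ordinal} {g : PartFun} (hδ : 0 < δ)
    (hg : ∀ i x, g i = some x → x < δ) : IsFunOn η δ (padTo η g) := by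
  refine ⟨Set.ext fun i => by by_cases hi : i < η <;> simp [pdom, padTo, hi], fun {i x} hx => ?_⟩
  by_cases hi : i < η <;> simp only [padTo, hi, if_true, if_false, reduceCtorEq,
    Option.some.injEq] at hx
  cases hgi : g i with
  | none => simpa [hgi, ← hx] using hδ
  | some y => simpa [hgi, ← hx] using hg i y hgi

theorem padTo_le {η : Ordinal} {g : PartFun} (hg : ∀ i x, g i = some x → i < η) :
    PFunLE (padTo η g) g := fun i x hx => by simp [padTo, hg i x hx, hx]

section Concatenation

variable {c : Ordinal → Ordinal → PartFun} {L L' : Ordinal → Ordinal} {ξ ξ' δ : Ordinal}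
  {f f' F : PartFun}

-- Block `a` carries `c (L a) (f a)`, a function on `1 + L a`; the `1 +` keeps every block
-- nonempty, so that `f a` can be read back from its block.
noncomputable def concatCode (c : Ordinal → Ordinal → PartFun) (L : Ordinal → Ordinal)
    (f : PartFun) : PartFun := fun β =>
  (f (blockIndex L β)).bind fun v => c (L (blockIndex L β)) v (β - blockStart L (blockIndex L β))

theorem concatCode_blockStart_add {b i : Ordinal} (hi : i < 1 + L b) :
    concatCode c L f (blockStart L b + i) = (f b).bind fun v => c (L b) v i := by
  simp only [concatCode, blockIndex_blockStart_add hi, Ordinal.add_sub_cancel]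

theorem isFunOn_concatCode (hc : ∀ a < ξ, MapsTo (c (L a)) (Iio δ) {g | IsFunOn (1 + L a) δ g})
    (hf : IsFunOn ξ δ f) : IsFunOn (blockStart L ξ) δ (concatCode c L f) := by
  constructor
  · ext β
    obtain ⟨b, i, hi, rfl⟩ := exists_blockStart_add_eq L β
    simp only [pdom, mem_ofPred_eq, mem_Iio, concatCode_blockStart_add hi, blockStart_add_lt_iff hi]
    rw [← hf.isSome_iff]
    cases hfb : f b with
    | none => simp
    | some v =>
      have hb : b < ξ := hf.isSome_iff.mp (by simp [hfb])
      simpa using ((hc b hb (hf.lt_of_eq_some hfb)).isSome_iff).mpr hi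
  · intro β x hx
    obtain ⟨b, i, hi, rfl⟩ := exists_blockStart_add_eq L β
    rw [concatCode_blockStart_add hi] at hx
    obtain ⟨v, hv, hx⟩ := Option.bind_eq_some_iff.mp hx
    exact (hc b (hf.isSome_iff.mp (by simp [hv])) (hf.lt_of_eq_some hv)).lt_of_eq_some hx

theorem concatCode_le_concatCode_iff
    (hc : ∀ a < ξ, BijOn (c (L a)) (Iio δ) {g | IsFunOn (1 + L a) δ g})
    (hL : ∀ a < ξ, L' a = L a) (hξ : ξ ≤ ξ') (hf : IsFunOn ξ δ f) (hf' : IsFunOn ξ' δ f') :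
    PFunLE (concatCode c L' f') (concatCode c L f) ↔ PFunLE f' f := by
  have hblock : ∀ b < ξ, ∀ i < 1 + L b,
      concatCode c L' f' (blockStart L b + i) = (f' b).bind fun v => c (L b) v i := by
    intro b hb i hi
    rw [← blockStart_congr fun a ha => hL a (ha.trans hb),
      concatCode_blockStart_add (by rwa [hL b hb]), hL b hb]
  constructor
  · intro h a v hfa
    have ha : a < ξ := hf.isSome_iff.mp (by simp [hfa])
    obtain ⟨v', hv'⟩ := Option.isSome_iff_exists.mp (hf'.isSome_iff.mpr (ha.trans_le hξ))
    have hcv := (hc a ha).mapsTo (hf.lt_of_eq_some hfa)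
    have hcv' := (hc a ha).mapsTo (hf'.lt_of_eq_some hv')
    have hcode : c (L a) v' = c (L a) v := hcv'.eq_of_le hcv fun i x hx => by
      have hi : i < 1 + L a := hcv.isSome_iff.mp (by simp [hx])
      have := h (blockStart L a + i) x (by rw [concatCode_blockStart_add hi, hfa]; exact hx)
      rwa [hblock a ha i hi, hv'] at this
    rw [hv', (hc a ha).injOn (hf'.lt_of_eq_some hv') (hf.lt_of_eq_some hfa) hcode]
  · intro h β x hx
    obtain ⟨b, i, hi, rfl⟩ := exists_blockStart_add_eq L β
    rw [concatCode_blockStart_add hi] at hx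
    obtain ⟨v, hv, hx⟩ := Option.bind_eq_some_iff.mp hx
    rw [hblock b (hf.isSome_iff.mp (by simp [hv])) i hi, h b v hv]
    exact hx

theorem exists_isFunOn_concatCode_le
    (hc : ∀ a < ξ, SurjOn (c (L a)) (Iio δ) {g | IsFunOn (1 + L a) δ g}) (hδ : 0 < δ)
    (hF : ∀ β x, F β = some x → β < blockStart L ξ ∧ x < δ) :
    ∃ f, IsFunOn ξ δ f ∧ PFunLE (concatCode c L f) F := by
  have hpiece : ∀ a, ∃ v, a < ξ →
      v < δ ∧ c (L a) v = padTo (1 + L a) fun i => F (blockStart L a + i) := by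
    intro a
    by_cases ha : a < ξ
    · obtain ⟨v, hv, hcv⟩ := hc a ha (isFunOn_padTo hδ fun i x hx => (hF _ x hx).2)
      exact ⟨v, fun _ => ⟨hv, hcv⟩⟩
    · exact ⟨0, fun h => absurd h ha⟩
  choose v hv using hpiece
  refine ⟨fun a => if a < ξ then some (v a) else none, ⟨?_, fun {a x} hx => ?_⟩, ?_⟩
  · ext a
    by_cases ha : a < ξ <;> simp [pdom, ha]
  · by_cases ha : a < ξ <;> simp only [ha, if_true, if_false, reduceCtorEq,
      Option.some.injEq] at hx
    exact hx ▸ (hv a ha).1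
  · intro β x hx
    obtain ⟨b, i, hi, rfl⟩ := exists_blockStart_add_eq L β
    have hb : b < ξ := (blockStart_add_lt_iff hi).mp (hF _ x hx).1
    simp [concatCode_blockStart_add hi, hb, (hv b hb).2, padTo, hi, hx]

end Concatenation

def IsBlockCoding (K : Ordinal) (S : Set Ordinal) (dec : Ordinal → Ordinal → Ordinal → PartFun) :
    Prop :=
  ∀ δ ∈ S, ∀ ℓ < K, BijOn (dec δ ℓ) (Iio δ) {g | IsFunOn (1 + ℓ) δ g}

theorem exists_bijOn_of_equiv {α β : Type*} [Nonempty β] {s : Set α} {t : Set β} (e : s ≃ t) :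
    ∃ f : α → β, BijOn f s t := by
  classical
  refine ⟨fun a => if h : a ∈ s then e ⟨a, h⟩ else Classical.arbitrary β, ?_, ?_, ?_⟩
  · intro a ha
    simp [ha]
  · intro a ha a' ha' h
    simpa [ha, ha', Subtype.val_inj] using h
  · intro b hb
    exact ⟨e.symm ⟨b, hb⟩, (e.symm ⟨b, hb⟩).2, by simp⟩

noncomputable def isFunOnEquiv (η δ : Ordinal) : {f | IsFunOn η δ f} ≃ (Iio η → Iio δ) where
  toFun f i := ⟨(f.1 i).get (f.2.isSome_iff.mpr i.2), f.2.lt_of_eq_some (Option.some_get _).symm⟩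
  invFun F := ⟨fun i => if h : i < η then some (F ⟨i, h⟩) else none,
    ⟨Set.ext fun i => by by_cases h : i < η <;> simp [pdom, h], fun {i b} hb => by
      by_cases h : i < η <;> simp only [h, dif_pos, dif_neg, reduceCtorEq,
        not_false_eq_true, Option.some.injEq] at hb
      exact hb ▸ (F ⟨i, h⟩).2⟩⟩
  left_inv f := by
    ext1
    funext i
    by_cases h : i < η
    · simp only [h, dif_pos, Option.some_get]
    · simp only [h, dif_neg, not_false_eq_true]
      exact (Option.not_isSome_iff_eq_none.mp (f.2.isSome_iff.not.mpr h)).symm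
  right_inv F := by
    funext i
    simp

theorem exists_isBlockCoding (K : Cardinal.{0}) (hK : ℵ₀ ≤ K) (S : Set Ordinal)
    (hS : ∀ δ ∈ S, δ.card ^< K = δ.card) : ∃ dec, IsBlockCoding K.ord S dec := by
  have hcode : ∀ δ ℓ, ∃ c : Ordinal → PartFun, δ ∈ S → ℓ < K.ord →
      BijOn c (Iio δ) {g | IsFunOn (1 + ℓ) δ g} := by
    intro δ ℓ
    by_cases h : δ ∈ S ∧ ℓ < K.ord
    · have hcard : (1 + ℓ).card < K := by
        rw [Ordinal.card_add, Ordinal.card_one]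
        exact Cardinal.add_lt_of_lt hK (Cardinal.one_lt_aleph0.trans_le hK)
          (Cardinal.lt_ord.mp h.2)
      have hpow : δ.card ^ (1 + ℓ).card = δ.card :=
        le_antisymm ((Cardinal.le_powerlt δ.card hcard).trans_eq (hS δ h.1))
          (Cardinal.self_le_power _ (by simp [Ordinal.card_add]))
      have e : Nonempty (Iio δ ≃ {g | IsFunOn (1 + ℓ) δ g}) := by
        refine Cardinal.eq.mp ?_
        rw [Cardinal.mk_congr (isFunOnEquiv (1 + ℓ) δ), Cardinal.mk_arrow, Cardinal.lift_id,
          Cardinal.lift_id, Cardinal.mk_Iio_ordinal, Cardinal.mk_Iio_ordinal,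
          ← Cardinal.lift_power, hpow]
      obtain ⟨c, hc⟩ := exists_bijOn_of_equiv e.some
      exact ⟨c, fun _ _ => hc⟩
    · exact ⟨fun _ _ => none, fun h1 h2 => absurd ⟨h1, h2⟩ h⟩
  choose dec hdec using hcode
  exact ⟨dec, fun δ hδ ℓ hℓ => hdec δ ℓ hδ hℓ⟩

theorem PFunLE.pdom_subset {f g : PartFun} (h : PFunLE f g) : pdom g ⊆ pdom f := fun a ha => by
  obtain ⟨b, hb⟩ := Option.isSome_iff_exists.mp ha
  simp [pdom, h a b hb]

theorem IsEaston.mono {X Y : Set Ordinal} (hY : IsEaston Y) (h : X ⊆ Y) : IsEaston X :=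
  fun α hα => (csSup_le_csSup' ⟨α, fun _ hx => hx.2.le⟩ (inter_subset_inter_left _ h)).trans_lt
    (hY α hα)

theorem IsEaston.insert {X : Set Ordinal} (hX : IsEaston X) (K : Ordinal) :
    IsEaston (insert K X) := by
  intro α hα
  have hbdd : BddAbove (X ∩ Iio α) := ⟨α, fun _ hx => hx.2.le⟩
  by_cases hK : K < α
  · refine (csSup_le' ?_).trans_lt (max_lt hK (hX α hα))
    rintro x ⟨rfl | hx, hxα⟩
    · exact le_max_left _ _
    · exact (le_csSup hbdd ⟨hx, hxα⟩).trans (le_max_right _ _)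
  · refine (csSup_le_csSup' hbdd ?_).trans_lt (hX α hα)
    rintro x ⟨rfl | hx, hxα⟩
    · exact absurd hxα hK
    · exact ⟨hx, hxα⟩

theorem IsRegOrd.pos {α : Ordinal} (h : IsRegOrd α) : 0 < α := by
  rw [← h.2, Cardinal.lt_ord]
  simpa using h.1.pos

theorem isCol_of_isFunOn {μ : Cardinal.{0}} {K ξ : Ordinal} {s : PartFun} (hξ : ξ < μ.ord)
    (hs : IsFunOn ξ K s) : IsCol μ.ord K s := by
  refine ⟨fun a b h => ⟨(hs.isSome_iff.mp (by simp [h])).trans hξ, hs.lt_of_eq_some h⟩, ?_⟩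
  rw [hs.pdom_eq, Cardinal.mk_Iio_ordinal, Cardinal.card_ord]
  exact Cardinal.lift_lt.mpr (Cardinal.lt_ord.mp hξ)

def blockLen (s : PartFun) (a : Ordinal) : Ordinal := (s a).getD 0

theorem IsCol.exists_pdom_lt {μ : Cardinal.{0}} (hμ : μ.IsRegular) {K : Ordinal} {g : PartFun}
    (hg : IsCol μ.ord K g) : ∃ ζ < μ.ord, ∀ a ∈ pdom g, a < ζ := by
  have hgμ : ∀ a ∈ pdom g, a < μ.ord := fun a ha => by
    obtain ⟨b, hb⟩ := Option.isSome_iff_exists.mp ha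
    exact (hg.1 a b hb).1
  refine ⟨sSup ((· + 1) '' pdom g), ?_, fun a ha => ?_⟩
  · refine Ordinal.sSup_add_one_lt_of_lt_cof ?_ hgμ
    rw [← Ordinal.lift_cof, hμ.cof_ord]
    simpa using hg.2
  · refine (Order.lt_add_one_iff.mpr le_rfl).trans_le (le_csSup ⟨μ.ord, ?_⟩ ⟨a, ha, rfl⟩)
    rintro _ ⟨b, hb, rfl⟩
    exact Order.add_one_le_of_lt (hgμ b hb)

theorem IsCol.exists_isFunOn_extension {μ : Cardinal.{0}} (hμ : μ.IsRegular) {K ξ' : Ordinal}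
    {g : PartFun} (hg : IsCol μ.ord K g) (hξ' : ξ' < K) :
    ∃ ξ < μ.ord, ∃ s, IsFunOn ξ K s ∧ PFunLE s g ∧ ξ' ≤ blockStart (blockLen s) ξ := by
  obtain ⟨ζ, hζ, hgζ⟩ := hg.exists_pdom_lt hμ
  set g' := Function.update g ζ (some ξ')
  have hg' : ∀ a b, g' a = some b → a < ζ + 1 ∧ b < K := fun a b hab => by
    by_cases ha : a = ζ
    · subst ha
      simp only [g', Function.update_self, Option.some.injEq] at hab
      exact ⟨Order.lt_add_one_iff.mpr le_rfl, hab ▸ hξ'⟩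
    · simp only [g', Function.update_of_ne ha] at hab
      exact ⟨(hgζ a (by simp [pdom, hab])).trans (Order.lt_add_one_iff.mpr le_rfl),
        (hg.1 a b hab).2⟩
  have hg'g : PFunLE g' g := fun a b hab => by
    simpa [g', Function.update_of_ne (hgζ a (by simp [pdom, hab])).ne] using hab
  refine ⟨ζ + 1, (Cardinal.isSuccLimit_ord hμ.aleph0_le).add_one_lt hζ, padTo (ζ + 1) g',
    isFunOn_padTo (pos_of_gt hξ') fun a b hab => (hg' a b hab).2,
    fun a b hab => padTo_le (fun a b hab => (hg' a b hab).1) a b (hg'g a b hab), ?_⟩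
  rw [blockStart_add_one]
  have hlen : blockLen (padTo (ζ + 1) g') ζ = ξ' := by
    simp [blockLen, padTo, g']
  rw [hlen]
  exact le_add_self.trans le_add_self

def IsUniform (K ξ : Ordinal) (p : LaverFun) : Prop :=
  K ∈ ldom p ∧ ∀ δ f, p δ = some f → IsFunOn ξ δ f

def collapsePart (K : Ordinal) (p : LaverFun) : PartFun := (p K).getD fun _ => none

noncomputable def laverPart (dec : Ordinal → Ordinal → Ordinal → PartFun) (K : Ordinal)
    (p : LaverFun) : LaverFun := fun δ =>
  if δ = K then none else (p δ).map (concatCode (dec δ) (blockLen (collapsePart K p)))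

section Projection

variable {dec : Ordinal → Ordinal → Ordinal → PartFun} {K lam ξ δ : Ordinal} {S : Set Ordinal}
  {p q r : LaverFun} {g : PartFun}

theorem collapsePart_eq (h : p K = some g) : collapsePart K p = g := by
  simp [collapsePart, h]

theorem IsUniform.eq_some_collapsePart (hp : IsUniform K ξ p) : p K = some (collapsePart K p) := by
  obtain ⟨s, hs⟩ := Option.isSome_iff_exists.mp hp.1
  rw [hs, collapsePart_eq hs]

theorem IsUniform.isFunOn_collapsePart (hp : IsUniform K ξ p) : IsFunOn ξ K (collapsePart K p) :=
  hp.2 K _ hp.eq_some_collapsePart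

theorem laverPart_eq_some_iff :
    laverPart dec K p δ = some g ↔
      δ ≠ K ∧ ∃ f, p δ = some f ∧ concatCode (dec δ) (blockLen (collapsePart K p)) f = g := by
  unfold laverPart
  split_ifs with h <;> simp [h]

theorem isLaverOn_and_isUniform_update {μ : Ordinal} {s : PartFun} {h : Ordinal → PartFun → PartFun}
    (hK : IsRegOrd K) (hKlam : K < lam) (hξ : ξ < μ) (hs : IsFunOn ξ K s)
    (hdom : ∀ δ ∈ ldom q, IsRegOrd δ ∧ δ ∈ Ico K lam) (hE : IsEaston (ldom q))
    (hh : ∀ δ f, q δ = some f → IsFunOn ξ δ (h δ f)) :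
    IsLaverOn μ (Ico K lam) (Function.update (fun δ => (q δ).map (h δ)) K (some s)) ∧
      IsUniform K ξ (Function.update (fun δ => (q δ).map (h δ)) K (some s)) := by
  set p := Function.update (fun δ => (q δ).map (h δ)) K (some s)
  have hld : ldom p = insert K (ldom q) := by
    ext δ
    by_cases hδ : δ = K
    · subst hδ
      simp [p, ldom]
    · simp [p, ldom, hδ]
  have hu : IsUniform K ξ p := by
    refine ⟨hld ▸ mem_insert K _, fun δ f hf => ?_⟩
    by_cases hδ : δ = K
    · subst hδ
      simp only [p, Function.update_self, Option.some.injEq] at hf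
      exact hf ▸ hs
    · simp only [p, Function.update_of_ne hδ, Option.map_eq_some_iff] at hf
      obtain ⟨f', hf', rfl⟩ := hf
      exact hh δ f' hf'
  refine ⟨⟨?_, hld ▸ hE.insert K, ξ, hξ, fun δ f hf a b hab => ?_⟩, hu⟩
  · rw [hld]
    rintro δ (rfl | hδ)
    · exact ⟨hK, left_mem_Ico.mpr hKlam⟩
    · exact hdom δ hδ
  · exact ⟨(hu.2 δ f hf).isSome_iff.mp (by simp [hab]), (hu.2 δ f hf).lt_of_eq_some hab⟩

theorem exists_isUniform_laverLE {μ : Ordinal} (hK : IsRegOrd K) (hKlam : K < lam)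
    (hp : IsLaverOn μ (Ico K lam) p) :
    ∃ d, (IsLaverOn μ (Ico K lam) d ∧ ∃ ξ < μ, IsUniform K ξ d) ∧ LaverLE d p := by
  obtain ⟨hdom, hE, ξ, hξ, hb⟩ := hp
  have hsK : ∀ a b, collapsePart K p a = some b → b < K := fun a b hab => by
    cases hpK : p K with
    | none => simp [collapsePart, hpK] at hab
    | some s => exact (hb K s hpK a b (by rwa [collapsePart_eq hpK] at hab)).2
  obtain ⟨hd, hu⟩ := isLaverOn_and_isUniform_update (h := fun _ => padTo ξ) hK hKlam hξ
    (isFunOn_padTo hK.pos hsK) hdom hE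
    fun δ f hf => isFunOn_padTo (hdom δ (by simp [ldom, hf])).1.pos
      fun a b hab => (hb δ f hf a b hab).2
  refine ⟨_, ⟨hd, ξ, hξ, hu⟩, fun δ f hf => ?_⟩
  have hfξ : ∀ a b, f a = some b → a < ξ := fun a b hab => (hb δ f hf a b hab).1
  by_cases hδ : δ = K
  · subst hδ
    refine ⟨_, Function.update_self .., ?_⟩
    rw [collapsePart_eq hf]
    exact padTo_le hfξ
  · exact ⟨padTo ξ f, by simp [Function.update_of_ne hδ, hf], padTo_le hfξ⟩

theorem isLaver_laverPart {κ : Cardinal.{0}} (hκ : κ.IsRegular) {μ : Ordinal}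
    (hdec : IsBlockCoding κ.ord S dec) (hp : IsLaverOn μ (Ico κ.ord lam) p) (hξ : ξ < κ.ord)
    (hu : IsUniform κ.ord ξ p) (hS : ∀ δ ∈ ldom p, δ ≠ κ.ord → δ ∈ S) :
    IsLaver κ.ord lam (laverPart dec κ.ord p) := by
  have hκ0 : 0 < κ.ord := Cardinal.ord_pos.mpr hκ.pos
  have hs := hu.isFunOn_collapsePart
  have hmem : ∀ δ g, laverPart dec κ.ord p δ = some g → ∃ f, p δ = some f ∧ δ ≠ κ.ord ∧
      IsFunOn (blockStart (blockLen (collapsePart κ.ord p)) ξ) δ g := by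
    intro δ g hg
    obtain ⟨hne, f, hf, rfl⟩ := laverPart_eq_some_iff.mp hg
    refine ⟨f, hf, hne, isFunOn_concatCode (fun a _ => ?_) (hu.2 δ f hf)⟩
    exact (hdec δ (hS δ (by simp [ldom, hf]) hne) _ (hs.getD_lt hκ0 a)).mapsTo
  have hld : ldom (laverPart dec κ.ord p) ⊆ ldom p := fun δ hδ => by
    obtain ⟨g, hg⟩ := Option.isSome_iff_exists.mp hδ
    obtain ⟨f, hf, -⟩ := hmem δ g hg
    simp [ldom, hf]
  refine ⟨fun δ hδ => ?_, hp.2.1.mono hld, _,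
    blockStart_lt_ord hκ (Cardinal.lt_ord.mp hξ) (hs.getD_lt hκ0), fun δ g hg a b hab => ?_⟩
  · obtain ⟨g, hg⟩ := Option.isSome_iff_exists.mp hδ
    obtain ⟨f, hf, hne, -⟩ := hmem δ g hg
    obtain ⟨hreg, hκδ, hδlam⟩ := hp.1 δ (by simp [ldom, hf])
    exact ⟨hreg, lt_of_le_of_ne hκδ (Ne.symm hne), hδlam⟩
  · obtain ⟨-, -, -, hg⟩ := hmem δ g hg
    exact ⟨hg.isSome_iff.mp (by simp [hab]), hg.lt_of_eq_some hab⟩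

theorem exists_isUniform_laverPart_le {μ : Cardinal.{0}} (hμ : μ.IsRegular) (hK : IsRegOrd K)
    (hKlam : K < lam) (hdec : IsBlockCoding K S dec) (hg : IsCol μ.ord K g)
    (hq : IsLaver K lam q) (hS : ∀ δ ∈ ldom q, δ ∈ S) :
    ∃ p, (IsLaverOn μ.ord (Ico K lam) p ∧ ∃ ξ < μ.ord, IsUniform K ξ p) ∧
      PFunLE (collapsePart K p) g ∧ LaverLE (laverPart dec K p) q := by
  obtain ⟨hdom, hE, ξ', hξ'K, hqb⟩ := hq
  obtain ⟨ξ, hξμ, s, hs, hsg, hξ'⟩ := hg.exists_isFunOn_extension hμ hξ'K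
  have hcode : ∀ δ, ∃ f, ∀ F, q δ = some F →
      IsFunOn ξ δ f ∧ PFunLE (concatCode (dec δ) (blockLen s) f) F := by
    intro δ
    cases hqδ : q δ with
    | none => exact ⟨fun _ => none, by simp⟩
    | some F =>
      have hδ : δ ∈ ldom q := by simp [ldom, hqδ]
      obtain ⟨f, hf⟩ := exists_isFunOn_concatCode_le
        (fun a _ => (hdec δ (hS δ hδ) _ (hs.getD_lt hK.pos a)).surjOn) (hdom δ hδ).1.pos
        fun β x hx => ⟨((hqb δ F hqδ β x hx).1.trans_le hξ'), (hqb δ F hqδ β x hx).2⟩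
      exact ⟨f, fun F' hF' => Option.some.inj hF' ▸ hf⟩
  choose f hf using hcode
  obtain ⟨hp, hu⟩ := isLaverOn_and_isUniform_update (h := fun δ _ => f δ) hK hKlam hξμ hs
    (fun δ hδ => ⟨(hdom δ hδ).1, Ioo_subset_Ico_self (hdom δ hδ).2⟩) hE
    fun δ F hF => (hf δ F hF).1
  have hcol : collapsePart K (Function.update (fun δ => (q δ).map fun _ => f δ) K (some s)) = s :=
    collapsePart_eq (Function.update_self ..)
  refine ⟨_, ⟨hp, ξ, hξμ, hu⟩, by rwa [hcol], fun δ F hF => ?_⟩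
  have hne : δ ≠ K := ((hdom δ (by simp [ldom, hF])).2.1).ne'
  refine ⟨_, laverPart_eq_some_iff.mpr ⟨hne, f δ, by simp [Function.update_of_ne hne, hF], rfl⟩, ?_⟩
  rw [hcol]
  exact (hf δ F hF).2

theorem laverLE_iff_of_isUniform {ξp ξr : Ordinal} (hdec : IsBlockCoding K S dec) (hK : 0 < K)
    (hp : IsUniform K ξp p) (hr : IsUniform K ξr r) (hS : ∀ δ ∈ ldom r, δ ≠ K → δ ∈ S) :
    LaverLE p r ↔ PFunLE (collapsePart K p) (collapsePart K r) ∧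
      LaverLE (laverPart dec K p) (laverPart dec K r) := by
  have hsp := hp.isFunOn_collapsePart
  have hsr := hr.isFunOn_collapsePart
  have hcode : PFunLE (collapsePart K p) (collapsePart K r) → ∀ δ fp fr, p δ = some fp →
      r δ = some fr → δ ≠ K →
      (PFunLE (concatCode (dec δ) (blockLen (collapsePart K p)) fp)
        (concatCode (dec δ) (blockLen (collapsePart K r)) fr) ↔ PFunLE fp fr) := by
    intro hs δ fp fr hfp hfr hne
    have hξ : ξr ≤ ξp := Iio_subset_Iio_iff.mp (hsr.pdom_eq ▸ hsp.pdom_eq ▸ hs.pdom_subset)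
    refine concatCode_le_concatCode_iff
      (fun a _ => hdec δ (hS δ (by simp [ldom, hfr]) hne) _ (hsr.getD_lt hK a))
      (fun a ha => ?_) hξ (hr.2 δ fr hfr) (hp.2 δ fp hfp)
    obtain ⟨b, hb⟩ := Option.isSome_iff_exists.mp (hsr.isSome_iff.mpr ha)
    simp [blockLen, hb, hs a b hb]
  constructor
  · intro h
    have hs : PFunLE (collapsePart K p) (collapsePart K r) := by
      obtain ⟨s, hs, hle⟩ := h K _ hr.eq_some_collapsePart
      rwa [collapsePart_eq hs]
    refine ⟨hs, fun δ g hg => ?_⟩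
    obtain ⟨hne, fr, hfr, rfl⟩ := laverPart_eq_some_iff.mp hg
    obtain ⟨fp, hfp, hle⟩ := h δ fr hfr
    exact ⟨_, laverPart_eq_some_iff.mpr ⟨hne, fp, hfp, rfl⟩, (hcode hs δ fp fr hfp hfr hne).mpr hle⟩
  · rintro ⟨hs, h⟩ δ fr hfr
    by_cases hne : δ = K
    · subst hne
      rw [← collapsePart_eq hfr]
      exact ⟨_, hp.eq_some_collapsePart, hs⟩
    · obtain ⟨g, hg, hle⟩ := h δ _ (laverPart_eq_some_iff.mpr ⟨hne, fr, hfr, rfl⟩)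
      obtain ⟨-, fp, hfp, rfl⟩ := laverPart_eq_some_iff.mp hg
      exact ⟨fp, hfp, (hcode hs δ fp fr hfp hfr hne).mp hle⟩

end Projection

/-- Lemma 3 (laverproj): for regular `μ < κ`, `λ > κ` with `δ^{<κ} = δ` for all regular
`δ ∈ (κ, λ)`, there is an order-isomorphism from a dense subset of `𝕃(μ, λ) ↾ [κ, λ)`
onto a dense subset of `Col(μ, κ) × 𝕃(κ, λ)`. -/
theorem statement8 (μ κ : Cardinal) (hμ : μ.IsRegular) (hκ : κ.IsRegular) (hμκ : μ < κ)
    (lam : Ordinal) (hlam : κ.ord < lam)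
    (hpow : ∀ δ : Ordinal, IsRegOrd δ → κ.ord < δ → δ < lam → δ.card ^< κ = δ.card) :
    ∃ (D : Set LaverFun) (E : Set (PartFun × LaverFun)) (π : LaverFun → PartFun × LaverFun),
      (∀ p ∈ D, IsLaverOn μ.ord (Set.Ico κ.ord lam) p) ∧
      (∀ p, IsLaverOn μ.ord (Set.Ico κ.ord lam) p → ∃ d ∈ D, LaverLE d p) ∧
      (∀ e ∈ E, IsCol μ.ord κ.ord e.1 ∧ IsLaver κ.ord lam e.2) ∧
      (∀ e : PartFun × LaverFun, IsCol μ.ord κ.ord e.1 → IsLaver κ.ord lam e.2 →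
        ∃ e' ∈ E, PFunLE e'.1 e.1 ∧ LaverLE e'.2 e.2) ∧
      (∀ p ∈ D, π p ∈ E) ∧ (∀ e ∈ E, ∃ p ∈ D, π p = e) ∧
      (∀ p ∈ D, ∀ q ∈ D, (LaverLE p q ↔ PFunLE (π p).1 (π q).1 ∧ LaverLE (π p).2 (π q).2)) := by
  set S := {δ | IsRegOrd δ ∧ κ.ord < δ ∧ δ < lam}
  obtain ⟨dec, hdec⟩ := exists_isBlockCoding κ hκ.aleph0_le S fun δ h => hpow δ h.1 h.2.1 h.2.2
  have hK : IsRegOrd κ.ord := ⟨by rwa [Cardinal.card_ord], by rw [Cardinal.card_ord]⟩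
  have hS : ∀ p, IsLaverOn μ.ord (Ico κ.ord lam) p → ∀ δ ∈ ldom p, δ ≠ κ.ord → δ ∈ S :=
    fun p hp δ hδ hne => ⟨(hp.1 δ hδ).1, lt_of_le_of_ne (hp.1 δ hδ).2.1 (Ne.symm hne),
      (hp.1 δ hδ).2.2⟩
  set π : LaverFun → PartFun × LaverFun := fun p => (collapsePart κ.ord p, laverPart dec κ.ord p)
  set D := {p | IsLaverOn μ.ord (Ico κ.ord lam) p ∧ ∃ ξ < μ.ord, IsUniform κ.ord ξ p}
  refine ⟨D, π '' D, π, fun p hp => hp.1, fun p hp => exists_isUniform_laverLE hK hlam hp,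
    ?_, ?_, fun p hp => mem_image_of_mem π hp, fun e he => he, ?_⟩
  · rintro _ ⟨p, ⟨hp, ξ, hξ, hu⟩, rfl⟩
    exact ⟨isCol_of_isFunOn hξ hu.isFunOn_collapsePart,
      isLaver_laverPart hκ hdec hp (hξ.trans (Cardinal.ord_lt_ord.mpr hμκ)) hu (hS p hp)⟩
  · rintro ⟨g, q⟩ hg hq
    obtain ⟨p, hp, hle⟩ := exists_isUniform_laverPart_le hμ hK hlam hdec hg hq
      fun δ hδ => ⟨(hq.1 δ hδ).1, (hq.1 δ hδ).2⟩
    exact ⟨π p, mem_image_of_mem π hp, hle⟩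
  · rintro p ⟨-, _, -, hup⟩ r ⟨hr, _, -, hur⟩
    exact laverLE_iff_of_isUniform hdec hK.pos hup hur (hS r hr)
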